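/- arXiv:2305.15807 — 4 statements merged into one kernel-verified Lean document; each statement's English description precedes it below -/
import Mathlib

section
/- Strong duality for CBwK: in the CBwK setting, if the problem (r,c,B',ν) is feasible for some B' < B (strict componentwise inequality), then the function λ ↦ L(λ,B) = E_{X∼ν}[ max_{a∈A} { r(X,a) − ⟨c(X,a) − B, λ⟩ } ] attains its infimum over λ ∈ [0,∞)^d at some λ*_B ≥ 0, and this minimum value equals OPT(r,c,B). -/
/-!
Strong duality is Lagrangian duality for the convex set of pairs (expected cost minus `B`,
expected reward) achieved by static policies; it is convex because policies can be mixed.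
Weak duality `OPT ≤ L(λ,B)` holds for every `λ ≥ 0`, since the integrand of `L` dominates the
Lagrangian of any policy pointwise. Conversely, separating that set from the open box
`{v < 0} × (OPT, ∞)` by a hyperplane yields a multiplier `λ* ≥ 0` with
`reward - ⟨λ*, cost - B⟩ ≤ OPT` for every policy, the Slater point `B' < B` keeping the hyperplane
non-vertical; the policy that plays uniformly among the maximizers of
`r(x,a) - ⟨c(x,a) - B, λ*⟩` attains `L(λ*,B)`, so `L(λ*,B) ≤ OPT`.
-/

open MeasureTheory Finset

namespace CBwK

variable {X : Type*} [MeasurableSpace X] {A : Type*} [Fintype A] [Nonempty A] {d : ℕ}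

/-- A static policy: a measurable map `X → P(A)` with components `(π_a)_{a∈A}`. -/
def IsPolicy (π : X → A → ℝ) : Prop :=
  (∀ x a, 0 ≤ π x a) ∧ (∀ x, ∑ a, π x a = 1) ∧ (∀ a, Measurable fun x => π x a)

/-- Expected reward `E_{X∼ν}[Σ_a r(X,a) π_a(X)]` of a policy. -/
noncomputable def polReward (ν : Measure X) (r : X → A → ℝ) (π : X → A → ℝ) : ℝ :=
  ∫ x, ∑ a, r x a * π x a ∂ν

/-- Component `i` of the expected cost vector `E_{X∼ν}[Σ_a c(X,a) π_a(X)]` of a policy. -/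
noncomputable def polCost (ν : Measure X) (c : X → A → Fin d → ℝ) (π : X → A → ℝ)
    (i : Fin d) : ℝ :=
  ∫ x, ∑ a, c x a i * π x a ∂ν

/-- The problem `(r,c,B',ν)` is feasible. -/
def Feasible (ν : Measure X) (c : X → A → Fin d → ℝ) (B' : Fin d → ℝ) : Prop :=
  ∃ π, IsPolicy π ∧ ∀ i, polCost ν c π i ≤ B' i

/-- `OPT(r,c,B')`: optimal expected reward under the expected-cost constraints `B'`. -/
noncomputable def OPT (ν : Measure X) (r : X → A → ℝ) (c : X → A → Fin d → ℝ)
    (B' : Fin d → ℝ) : ℝ :=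
  sSup {y : ℝ | ∃ π, IsPolicy π ∧ (∀ i, polCost ν c π i ≤ B' i) ∧ y = polReward ν r π}

/-- `L(λ,C) = E_{X∼ν}[ max_a { r(X,a) − ⟨c(X,a) − C, λ⟩ } ]`. -/
noncomputable def L (ν : Measure X) (r : X → A → ℝ) (c : X → A → Fin d → ℝ)
    (lam : Fin d → ℝ) (C : Fin d → ℝ) : ℝ :=
  ∫ x, Finset.univ.sup' Finset.univ_nonempty
    (fun a => r x a - ∑ i, (c x a i - C i) * lam i) ∂ν

/-- Euclidean norm on `ℝ^d`. -/
noncomputable def enorm (v : Fin d → ℝ) : ℝ := Real.sqrt (∑ i, (v i) ^ 2)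

/-- ℓ1-norm on `ℝ^d`. -/
noncomputable def l1norm (v : Fin d → ℝ) : ℝ := ∑ i, |v i|

/-- Smallest component of a vector of `ℝ^d` (junk value `0` if `d = 0`). -/
noncomputable def minComp (v : Fin d → ℝ) : ℝ := ⨅ i, v i

end CBwK

lemma nonpos_of_forall_add_mul_le {a b c : ℝ} (h : ∀ τ : ℝ, 0 ≤ τ → a + τ * b ≤ c) : b ≤ 0 := by
  by_contra! hb
  have := h ((|c - a| + 1) / b) (by positivity)
  rw [div_mul_cancel₀ _ hb.ne'] at this
  linarith [le_abs_self (c - a)]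

lemma StrongDual.apply_pi_prod {ι : Type*} [Fintype ι] [DecidableEq ι]
    (f : StrongDual ℝ ((ι → ℝ) × ℝ)) (v : ι → ℝ) (t : ℝ) :
    f (v, t) = ∑ i, v i * f (Pi.single i 1, 0) + t * f (0, 1) := by
  have hvt : (v, t) =
      ∑ i, v i • ((Pi.single i 1 : ι → ℝ), (0 : ℝ)) + t • ((0 : ι → ℝ), (1 : ℝ)) := by
    ext
    · simp [Prod.fst_sum, Pi.single_apply]
    · simp [Prod.snd_sum]
  rw [hvt, map_add, map_sum]
  simp only [map_smul, smul_eq_mul]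

theorem Convex.exists_lagrange_multiplier {ι : Type*} [Fintype ι] {S : Set ((ι → ℝ) × ℝ)}
    (hS : Convex ℝ S) {p : ℝ} (hp : ∀ s ∈ S, (∀ i, s.1 i ≤ 0) → s.2 ≤ p)
    (hslater : ∃ s ∈ S, ∀ i, s.1 i < 0) :
    ∃ lam : ι → ℝ, (∀ i, 0 ≤ lam i) ∧ ∀ s ∈ S, s.2 - ∑ i, lam i * s.1 i ≤ p := by
  classical
  obtain ⟨s₀, hs₀, hs₀neg⟩ := hslater
  set O : Set ((ι → ℝ) × ℝ) := Set.univ.pi (fun _ => Set.Iio 0) ×ˢ Set.Ioi p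
  have hOopen : IsOpen O :=
    (isOpen_set_pi Set.finite_univ fun _ _ => isOpen_Iio).prod isOpen_Ioi
  have hOconv : Convex ℝ O := (convex_pi fun _ _ => convex_Iio 0).prod (convex_Ioi p)
  have hdisj : Disjoint O S := Set.disjoint_left.2 fun s ⟨hneg, hgt⟩ hs =>
    (hp s hs fun i => (hneg i trivial).le).not_gt hgt
  obtain ⟨f, α, hfO, hfS⟩ := geometric_hahn_banach_open hOconv hOopen hS hdisj
  have hfO' : ∀ v t, (∀ i, v i ≤ 0) → p ≤ t → f (v, t) ≤ α := by
    intro v t hv ht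
    refine closure_minimal (fun w hw => (hfO w hw).le)
      (isClosed_le f.continuous continuous_const) (s := O) ?_
    rw [closure_prod_eq, closure_pi_set, closure_Iio, closure_Ioi]
    exact ⟨fun i _ => hv i, ht⟩
  set g : ι → ℝ := fun i => f (Pi.single i 1, 0)
  set μ : ℝ := f (0, 1)
  have hf := f.apply_pi_prod
  have hg : ∀ i, 0 ≤ g i := fun i => by
    refine neg_nonpos.1 (nonpos_of_forall_add_mul_le (a := p * μ) (c := α) fun τ hτ => ?_)
    have h := hfO' (Pi.single i (-τ)) p (Pi.single_nonpos.2 (neg_nonpos.2 hτ)) le_rfl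
    rw [hf] at h
    simp only [Pi.single_apply, ite_mul, zero_mul, sum_ite_eq', mem_univ, if_true] at h
    linarith
  -- Slater's condition: the separating hyperplane is not vertical.
  have hμ : μ < 0 := by
    have hO := hfO (s₀.1, max p s₀.2 + 1)
      ⟨fun i _ => hs₀neg i, Set.mem_Ioi.2 (by linarith [le_max_left p s₀.2])⟩
    have hS₀ := hfS (s₀.1, s₀.2) hs₀
    rw [hf] at hO hS₀
    nlinarith [le_max_right p s₀.2]
  refine ⟨fun i => g i / -μ, fun i => div_nonneg (hg i) (neg_nonneg.2 hμ.le), fun s hs => ?_⟩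
  have hO := hfO' 0 p (fun _ => le_rfl) le_rfl
  have hs := hfS (s.1, s.2) hs
  rw [hf] at hO hs
  simp only [Pi.zero_apply, zero_mul, sum_const_zero, zero_add] at hO
  have hsum : ∑ i, g i / -μ * s.1 i = (∑ i, s.1 i * g i) / -μ := by
    rw [sum_div]; exact sum_congr rfl fun i _ => by ring
  rw [hsum, sub_le_iff_le_add, ← sub_le_iff_le_add', le_div_iff₀ (neg_pos.2 hμ)]
  linarith

theorem MeasureTheory.Integrable.finset_sup' {α ι : Type*} [MeasurableSpace α] {μ : Measure α}
    {s : Finset ι} (hs : s.Nonempty) {f : ι → α → ℝ} (hf : ∀ i ∈ s, Integrable (f i) μ) :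
    Integrable (fun x => s.sup' hs fun i => f i x) μ := by
  simp_rw [← Finset.sup'_apply]
  exact Finset.sup'_induction (p := fun g => Integrable g μ) hs _ (fun _ h₁ _ h₂ => h₁.sup h₂) hf

namespace CBwK

variable {X : Type*} [MeasurableSpace X] {A : Type*} [Fintype A] {d : ℕ} {ν : Measure X}
  {r : X → A → ℝ} {c : X → A → Fin d → ℝ} {B lam : Fin d → ℝ} {π π' : X → A → ℝ}

lemma IsPolicy.apply_le_one (hπ : IsPolicy π) (x : X) (a : A) : π x a ≤ 1 :=
  hπ.2.1 x ▸ single_le_sum (fun b _ => hπ.1 x b) (mem_univ a)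

lemma IsPolicy.integrable_sum_mul (hπ : IsPolicy π) {g : X → A → ℝ}
    (hg : ∀ a, Integrable (fun x => g x a) ν) : Integrable (fun x => ∑ a, g x a * π x a) ν :=
  integrable_finsetSum _ fun a _ => (hg a).mul_bdd (hπ.2.2 a).aestronglyMeasurable
    (ae_of_all _ fun x => (abs_of_nonneg (hπ.1 x a)).trans_le (hπ.apply_le_one x a))

lemma IsPolicy.mix (hπ : IsPolicy π) (hπ' : IsPolicy π') {s t : ℝ} (hs : 0 ≤ s) (ht : 0 ≤ t)
    (hst : s + t = 1) : IsPolicy fun x a => s * π x a + t * π' x a := by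
  refine ⟨fun x a => add_nonneg (mul_nonneg hs (hπ.1 x a)) (mul_nonneg ht (hπ'.1 x a)),
    fun x => ?_, fun a => ((hπ.2.2 a).const_mul s).add ((hπ'.2.2 a).const_mul t)⟩
  rw [sum_add_distrib, ← mul_sum, ← mul_sum, hπ.2.1 x, hπ'.2.1 x, mul_one, mul_one, hst]

lemma polReward_mix (hπ : IsPolicy π) (hπ' : IsPolicy π') {g : X → A → ℝ}
    (hg : ∀ a, Integrable (fun x => g x a) ν) (s t : ℝ) :
    polReward ν g (fun x a => s * π x a + t * π' x a)
      = s * polReward ν g π + t * polReward ν g π' := by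
  have hpt : ∀ x, ∑ a, g x a * (s * π x a + t * π' x a)
      = s * ∑ a, g x a * π x a + t * ∑ a, g x a * π' x a := fun x => by
    rw [mul_sum, mul_sum, ← sum_add_distrib]
    exact sum_congr rfl fun a _ => by ring
  rw [polReward, integral_congr_ae (ae_of_all _ hpt),
    integral_add ((hπ.integrable_sum_mul hg).const_mul s) ((hπ'.integrable_sum_mul hg).const_mul t),
    integral_const_mul, integral_const_mul, polReward, polReward]

lemma exists_isPolicy_sum_mul_eq_sup' [Nonempty A] (g : X → A → ℝ)
    (hg : ∀ a, Measurable fun x => g x a) :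
    ∃ π : X → A → ℝ, IsPolicy π ∧ ∀ x, ∑ a, g x a * π x a = univ.sup' univ_nonempty (g x) := by
  classical
  set M : X → ℝ := fun x => univ.sup' univ_nonempty (g x)
  have hM : Measurable M := by
    have hM : M = univ.sup' univ_nonempty fun a x => g x a :=
      funext fun x => (Finset.sup'_apply univ_nonempty (fun a x => g x a) x).symm
    rw [hM]
    exact Finset.measurable_sup' _ fun a _ => hg a
  -- the uniform distribution on the maximizers of `g x`; it needs no measurable argmax
  set I : X → A → ℝ := fun x a => if g x a = M x then 1 else 0
  set N : X → ℝ := fun x => ∑ a, I x a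
  have hN : ∀ x, 0 < N x := fun x => by
    obtain ⟨a₀, -, ha₀⟩ := univ.exists_mem_eq_sup' univ_nonempty (g x)
    have hI₀ : I x a₀ = 1 := if_pos ha₀.symm
    exact zero_lt_one.trans_le (hI₀ ▸ single_le_sum (fun a _ => by positivity) (mem_univ a₀))
  refine ⟨fun x a => I x a / N x, ⟨fun x a => by positivity, fun x => ?_, fun a => ?_⟩, fun x => ?_⟩
  · rw [← sum_div, div_self (hN x).ne']
  · exact (Measurable.ite (measurableSet_eq_fun (hg a) hM) measurable_const measurable_const).div
      (Finset.measurable_sum _ fun b _ =>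
        Measurable.ite (measurableSet_eq_fun (hg b) hM) measurable_const measurable_const)
  · calc ∑ a, g x a * (I x a / N x) = ∑ a, M x * I x a / N x :=
          sum_congr rfl fun a _ => by by_cases h : g x a = M x <;> simp [I, h, div_eq_mul_inv]
      _ = M x := by rw [← sum_div, ← mul_sum, mul_div_cancel_right₀ _ (hN x).ne']

lemma IsPolicy.sum_mul_le_sup' [Nonempty A] (hπ : IsPolicy π) (g : A → ℝ) (x : X) :
    ∑ a, g a * π x a ≤ univ.sup' univ_nonempty g :=
  calc ∑ a, g a * π x a ≤ ∑ a, univ.sup' univ_nonempty g * π x a :=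
        sum_le_sum fun a _ => mul_le_mul_of_nonneg_right (le_sup' g (mem_univ a)) (hπ.1 x a)
    _ = univ.sup' univ_nonempty g := by rw [← mul_sum, hπ.2.1 x, mul_one]

noncomputable def lagrangian (ν : Measure X) (r : X → A → ℝ) (c : X → A → Fin d → ℝ)
    (B lam : Fin d → ℝ) (π : X → A → ℝ) : ℝ :=
  polReward ν r π - ∑ i, lam i * (polCost ν c π i - B i)

lemma polReward_le_lagrangian (hcost : ∀ i, polCost ν c π i ≤ B i) (hlam : ∀ i, 0 ≤ lam i) :
    polReward ν r π ≤ lagrangian ν r c B lam π :=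
  (le_sub_self_iff _).2 <| sum_nonpos fun i _ =>
    mul_nonpos_of_nonneg_of_nonpos (hlam i) (sub_nonpos.2 (hcost i))

def policyOutcomes (ν : Measure X) (r : X → A → ℝ) (c : X → A → Fin d → ℝ) (B : Fin d → ℝ) :
    Set ((Fin d → ℝ) × ℝ) :=
  {s | ∃ π, IsPolicy π ∧ s = (fun i => polCost ν c π i - B i, polReward ν r π)}

lemma convex_policyOutcomes (hr : ∀ a, Integrable (fun x => r x a) ν)
    (hc : ∀ a i, Integrable (fun x => c x a i) ν) : Convex ℝ (policyOutcomes ν r c B) := by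
  rintro _ ⟨π, hπ, rfl⟩ _ ⟨π', hπ', rfl⟩ s t hs ht hst
  refine ⟨_, hπ.mix hπ' hs ht hst, Prod.ext (funext fun i => ?_) (polReward_mix hπ hπ' hr s t).symm⟩
  have hcost : polCost ν c (fun x a => s * π x a + t * π' x a) i
      = s * polCost ν c π i + t * polCost ν c π' i := polReward_mix hπ hπ' (hc · i) s t
  simp only [Prod.fst_add, Prod.smul_fst, Pi.add_apply, Pi.smul_apply, smul_eq_mul, hcost]
  linear_combination (-B i) * hst

variable [IsProbabilityMeasure ν]

lemma integral_sum_mul_eq_lagrangian (hπ : IsPolicy π) (hr : ∀ a, Integrable (fun x => r x a) ν)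
    (hc : ∀ a i, Integrable (fun x => c x a i) ν) :
    ∫ x, ∑ a, (r x a - ∑ i, (c x a i - B i) * lam i) * π x a ∂ν = lagrangian ν r c B lam π := by
  have hcost : ∀ i, Integrable (fun x => lam i * (∑ a, c x a i * π x a - B i)) ν := fun i =>
    ((hπ.integrable_sum_mul (hc · i)).sub (integrable_const _)).const_mul _
  have hpt : ∀ x, ∑ a, (r x a - ∑ i, (c x a i - B i) * lam i) * π x a
      = ∑ a, r x a * π x a - ∑ i, lam i * (∑ a, c x a i * π x a - B i) := fun x => by
    have hB : ∀ i, ∑ a, c x a i * π x a - B i = ∑ a, (c x a i - B i) * π x a := fun i => by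
      simp only [sub_mul, sum_sub_distrib, ← mul_sum, hπ.2.1 x, mul_one]
    calc _ = ∑ a, r x a * π x a - ∑ a, ∑ i, lam i * ((c x a i - B i) * π x a) := by
          rw [← sum_sub_distrib]
          refine sum_congr rfl fun a _ => ?_
          rw [sub_mul, sum_mul]
          exact congrArg _ (sum_congr rfl fun i _ => by ring)
      _ = _ := by rw [sum_comm]; simp only [hB, mul_sum]
  rw [integral_congr_ae (ae_of_all _ hpt), integral_sub (hπ.integrable_sum_mul hr)
    (integrable_finsetSum _ fun i _ => hcost i), integral_finsetSum _ fun i _ => hcost i,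
    lagrangian, polReward]
  refine congrArg _ (sum_congr rfl fun i _ => ?_)
  rw [integral_const_mul, integral_sub (hπ.integrable_sum_mul (hc · i)) (integrable_const _),
    integral_const, probReal_univ, one_smul, polCost]

lemma lagrangian_le_L [Nonempty A] (hr : ∀ a, Integrable (fun x => r x a) ν)
    (hc : ∀ a i, Integrable (fun x => c x a i) ν) (hπ : IsPolicy π) :
    lagrangian ν r c B lam π ≤ L ν r c lam B := by
  have hg : ∀ a, Integrable (fun x => r x a - ∑ i, (c x a i - B i) * lam i) ν := fun a =>
    (hr a).sub (integrable_finsetSum _ fun i _ => ((hc a i).sub (integrable_const _)).mul_const _)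
  rw [← integral_sum_mul_eq_lagrangian hπ hr hc, L]
  exact integral_mono (hπ.integrable_sum_mul hg) (Integrable.finset_sup' _ fun a _ => hg a)
    fun x => hπ.sum_mul_le_sup' _ x

lemma exists_lagrangian_eq_L [Nonempty A] (hr : ∀ a, Integrable (fun x => r x a) ν)
    (hc : ∀ a i, Integrable (fun x => c x a i) ν) (hrm : ∀ a, Measurable fun x => r x a)
    (hcm : ∀ a i, Measurable fun x => c x a i) :
    ∃ π, IsPolicy π ∧ lagrangian ν r c B lam π = L ν r c lam B := by
  obtain ⟨π, hπ, hmax⟩ := exists_isPolicy_sum_mul_eq_sup'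
    (fun x a => r x a - ∑ i, (c x a i - B i) * lam i)
    fun a => (hrm a).sub <|
      Finset.measurable_sum _ fun i _ => ((hcm a i).sub measurable_const).mul_const _
  refine ⟨π, hπ, ?_⟩
  rw [← integral_sum_mul_eq_lagrangian hπ hr hc]
  exact integral_congr_ae (ae_of_all _ hmax)

lemma polReward_le_OPT [Nonempty A] (hr : ∀ a, Integrable (fun x => r x a) ν)
    (hc : ∀ a i, Integrable (fun x => c x a i) ν) (hπ : IsPolicy π)
    (hcost : ∀ i, polCost ν c π i ≤ B i) :
    polReward ν r π ≤ OPT ν r c B := by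
  refine le_csSup ⟨L ν r c 0 B, ?_⟩ ⟨π, hπ, hcost, rfl⟩
  rintro _ ⟨π, hπ, hcost, rfl⟩
  exact (polReward_le_lagrangian hcost fun _ => le_rfl).trans (lagrangian_le_L hr hc hπ)

lemma OPT_le_L [Nonempty A] (hr : ∀ a, Integrable (fun x => r x a) ν)
    (hc : ∀ a i, Integrable (fun x => c x a i) ν) (hfeas : Feasible ν c B) (hlam : ∀ i, 0 ≤ lam i) :
    OPT ν r c B ≤ L ν r c lam B := by
  obtain ⟨π₀, hπ₀, hcost₀⟩ := hfeas
  refine csSup_le ⟨_, π₀, hπ₀, hcost₀, rfl⟩ ?_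
  rintro _ ⟨π, hπ, hcost, rfl⟩
  exact (polReward_le_lagrangian hcost hlam).trans (lagrangian_le_L hr hc hπ)

theorem strong_duality_general
    {X : Type*} [MeasurableSpace X] (ν : Measure X) [IsProbabilityMeasure ν]
    {A : Type*} [Fintype A] [Nonempty A] {d : ℕ}
    (r : X → A → ℝ) (c : X → A → Fin d → ℝ) (B : Fin d → ℝ)
    (hr : ∀ x a, r x a ∈ Set.Icc (0 : ℝ) 1)
    (hc : ∀ x a i, c x a i ∈ Set.Icc (-1 : ℝ) 1)
    (hrm : ∀ a, Measurable fun x => r x a)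
    (hcm : ∀ a i, Measurable fun x => c x a i)
    (hfeas : ∃ B' : Fin d → ℝ, (∀ i, B' i < B i) ∧ Feasible ν c B') :
    ∃ lamstar : Fin d → ℝ, (∀ i, 0 ≤ lamstar i) ∧
      (∀ lam : Fin d → ℝ, (∀ i, 0 ≤ lam i) → L ν r c lamstar B ≤ L ν r c lam B) ∧
      L ν r c lamstar B = OPT ν r c B := by
  have hri : ∀ a, Integrable (fun x => r x a) ν := fun a =>
    .of_mem_Icc 0 1 (hrm a).aemeasurable (ae_of_all _ (hr · a))
  have hci : ∀ a i, Integrable (fun x => c x a i) ν := fun a i =>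
    .of_mem_Icc (-1) 1 (hcm a i).aemeasurable (ae_of_all _ (hc · a i))
  obtain ⟨B', hB', π₀, hπ₀, hcost₀⟩ := hfeas
  have hslater : ∀ i, polCost ν c π₀ i - B i < 0 := fun i =>
    sub_neg.2 ((hcost₀ i).trans_lt (hB' i))
  obtain ⟨lam, hlam, hmult⟩ := (convex_policyOutcomes (B := B) hri hci).exists_lagrange_multiplier
    (p := OPT ν r c B) (by
      rintro _ ⟨π, hπ, rfl⟩ hcost
      exact polReward_le_OPT hri hci hπ fun i => sub_nonpos.1 (hcost i))
    ⟨_, ⟨π₀, hπ₀, rfl⟩, hslater⟩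
  obtain ⟨π, hπ, hπL⟩ := exists_lagrangian_eq_L (B := B) (lam := lam) hri hci hrm hcm
  have hLOPT : L ν r c lam B ≤ OPT ν r c B := hπL ▸ hmult _ ⟨π, hπ, rfl⟩
  have hweak : ∀ lam', (∀ i, 0 ≤ lam' i) → OPT ν r c B ≤ L ν r c lam' B :=
    fun _ => OPT_le_L hri hci ⟨π₀, hπ₀, fun i => (hcost₀ i).trans (hB' i).le⟩
  exact ⟨lam, hlam, fun lam' hlam' => hLOPT.trans (hweak lam' hlam'),
    hLOPT.antisymm (hweak lam hlam)⟩

/-- Strong duality for CBwK: if the problem is feasible for some `B' < B` (componentwise),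
then `λ ↦ L(λ,B)` attains its infimum over `λ ≥ 0` at some `λ*_B`, whose value equals
`OPT(r,c,B)`. -/
theorem strong_duality
    {X : Type*} [MeasurableSpace X] (ν : Measure X) [IsProbabilityMeasure ν]
    {A : Type*} [Fintype A] [Nonempty A] {d : ℕ} (hd : 0 < d)
    (r : X → A → ℝ) (c : X → A → Fin d → ℝ) (B : Fin d → ℝ)
    (hr : ∀ x a, r x a ∈ Set.Icc (0 : ℝ) 1)
    (hc : ∀ x a i, c x a i ∈ Set.Icc (-1 : ℝ) 1)
    (hrm : ∀ a, Measurable fun x => r x a)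
    (hcm : ∀ a i, Measurable fun x => c x a i)
    (hfeas : ∃ B' : Fin d → ℝ, (∀ i, B' i < B i) ∧ Feasible ν c B') :
    ∃ lamstar : Fin d → ℝ, (∀ i, 0 ≤ lamstar i) ∧
      (∀ lam : Fin d → ℝ, (∀ i, 0 ≤ lam i) → L ν r c lamstar B ≤ L ν r c lam B) ∧
      L ν r c lamstar B = OPT ν r c B :=
  strong_duality_general ν r c B hr hc hrm hcm hfeas

end CBwK
end

section
/- (Example 1 of the paper.) Consider the CBwK setting with scalar costs (d = 1): suppose there is a baseline action a₀ ∈ A with c(x,a₀) = 0 for all x ∈ X, and a constant α > 0 with c(x,a) ≥ α for all x ∈ X and all a ≠ a₀. Then for every B ≥ 0, OPT(r,c,B) − OPT(r,c,0) ≤ B/α. In particular, every static policy π with E_{X∼ν}[Σ_{a∈A} c(X,a) π_a(X)] ≤ B satisfies E_{X∼ν}[Σ_{a∈A} r(X,a) π_a(X)] ≤ E_{X∼ν}[r(X,a₀)] + B/α. -/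
/-! Off the baseline action every unit of probability mass earns reward at most `1` and costs at
least `α`, so pointwise `Σ_a r(x,a) π_a(x) ≤ r(x,a₀) + Σ_a c(x,a) π_a(x) / α`. Integrating bounds
the reward of every `B`-feasible policy by `E[r(X,a₀)] + B/α`, while the policy that always plays
`a₀` is `0`-feasible and earns exactly `E[r(X,a₀)]`. -/

open MeasureTheory Finset

namespace CBwK1

variable {X : Type*} [MeasurableSpace X] {A : Type*} [Fintype A] [Nonempty A]

/-- A static policy: a measurable map `X → P(A)` with components `(π_a)_{a∈A}`. -/
def IsPolicy (π : X → A → ℝ) : Prop :=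
  (∀ x a, 0 ≤ π x a) ∧ (∀ x, ∑ a, π x a = 1) ∧ (∀ a, Measurable fun x => π x a)

/-- Expected reward `E_{X∼ν}[Σ_a r(X,a) π_a(X)]` of a policy. -/
noncomputable def polReward (ν : Measure X) (r : X → A → ℝ) (π : X → A → ℝ) : ℝ :=
  ∫ x, ∑ a, r x a * π x a ∂ν

/-- Expected (scalar) cost `E_{X∼ν}[Σ_a c(X,a) π_a(X)]` of a policy. -/
noncomputable def polCost (ν : Measure X) (c : X → A → ℝ) (π : X → A → ℝ) : ℝ :=
  ∫ x, ∑ a, c x a * π x a ∂ν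

/-- `OPT(r,c,B')` for a scalar cost. -/
noncomputable def OPT (ν : Measure X) (r : X → A → ℝ) (c : X → A → ℝ) (B' : ℝ) : ℝ :=
  sSup {y : ℝ | ∃ π, IsPolicy π ∧ polCost ν c π ≤ B' ∧ y = polReward ν r π}

theorem sum_mul_le_add_sum_mul_div {ι : Type*} [Fintype ι] (p r c : ι → ℝ) (i₀ : ι) {α : ℝ}
    (hα : 0 < α) (hp : ∀ i, 0 ≤ p i) (hp₀ : p i₀ ≤ 1) (hr : ∀ i, r i ∈ Set.Icc (0 : ℝ) 1)
    (hc₀ : c i₀ = 0) (hc : ∀ i, i ≠ i₀ → α ≤ c i) :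
    ∑ i, r i * p i ≤ r i₀ + (∑ i, c i * p i) / α := by
  classical
  have hterm : ∀ i, r i * p i ≤ (if i = i₀ then r i₀ else 0) + c i * p i / α := by
    intro i
    by_cases h : i = i₀
    · subst h
      simpa [hc₀] using mul_le_of_le_one_right (hr i).1 hp₀
    · have hmass : p i ≤ c i * p i / α := by
        rw [le_div_iff₀ hα, mul_comm]
        exact mul_le_mul_of_nonneg_right (hc i h) (hp i)
      rw [if_neg h, zero_add]
      exact (mul_le_of_le_one_left (hp i) (hr i).2).trans hmass
  calc ∑ i, r i * p i ≤ ∑ i, ((if i = i₀ then r i₀ else 0) + c i * p i / α) :=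
        sum_le_sum fun i _ => hterm i
    _ = r i₀ + (∑ i, c i * p i) / α := by
        rw [sum_add_distrib, sum_ite_eq', if_pos (mem_univ _), sum_div]

section

omit [Nonempty A]

variable {ν : Measure X} {π : X → A → ℝ} {r c : X → A → ℝ}

theorem IsPolicy.le_one (hπ : IsPolicy π) (x : X) (a : A) : π x a ≤ 1 :=
  (single_le_sum (fun b _ => hπ.1 x b) (mem_univ a)).trans_eq (hπ.2.1 x)

theorem IsPolicy.integrable_sum_mul [IsFiniteMeasure ν] (hπ : IsPolicy π) {f : X → A → ℝ}
    (hfm : ∀ a, Measurable fun x => f x a) {C : ℝ} (hfC : ∀ x a, |f x a| ≤ C) :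
    Integrable (fun x => ∑ a, f x a * π x a) ν := by
  refine integrable_finsetSum _ fun a _ =>
    Integrable.of_bound ((hfm a).mul (hπ.2.2 a)).aestronglyMeasurable C (ae_of_all _ fun x => ?_)
  rw [Real.norm_eq_abs, abs_mul, abs_of_nonneg (hπ.1 x a)]
  exact (mul_le_of_le_one_right (abs_nonneg _) (hπ.le_one x a)).trans (hfC x a)

theorem polReward_le_integral_add_polCost_div [IsFiniteMeasure ν] {α : ℝ}
    (hr : ∀ x a, r x a ∈ Set.Icc (0 : ℝ) 1) (hc : ∀ x a, c x a ∈ Set.Icc (-1 : ℝ) 1)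
    (hrm : ∀ a, Measurable fun x => r x a) (hcm : ∀ a, Measurable fun x => c x a)
    {a₀ : A} (hnull : ∀ x, c x a₀ = 0) (hα : 0 < α) (hcost : ∀ x a, a ≠ a₀ → α ≤ c x a)
    (hπ : IsPolicy π) :
    polReward ν r π ≤ (∫ x, r x a₀ ∂ν) + polCost ν c π / α := by
  have hr_abs : ∀ x a, |r x a| ≤ 1 := fun x a => abs_le.mpr ⟨by linarith [(hr x a).1], (hr x a).2⟩
  have hc_abs : ∀ x a, |c x a| ≤ 1 := fun x a => abs_le.mpr (hc x a)
  have hr₀ : Integrable (fun x => r x a₀) ν :=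
    Integrable.of_bound (hrm a₀).aestronglyMeasurable 1 (ae_of_all _ fun x => hr_abs x a₀)
  have hcπ : Integrable (fun x => ∑ a, c x a * π x a) ν := hπ.integrable_sum_mul hcm hc_abs
  calc polReward ν r π ≤ ∫ x, (r x a₀ + (∑ a, c x a * π x a) / α) ∂ν :=
        integral_mono (hπ.integrable_sum_mul hrm hr_abs) (hr₀.add (hcπ.div_const α)) fun x =>
          sum_mul_le_add_sum_mul_div (π x) (r x) (c x) a₀ hα (hπ.1 x) (hπ.le_one x a₀) (hr x)
            (hnull x) (hcost x)
    _ = (∫ x, r x a₀ ∂ν) + polCost ν c π / α := by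
        rw [integral_add hr₀ (hcπ.div_const α), integral_div]
        rfl

variable {B' M : ℝ}

theorem OPT_le (hne : ∃ σ, IsPolicy σ ∧ polCost ν c σ ≤ B')
    (h : ∀ σ, IsPolicy σ → polCost ν c σ ≤ B' → polReward ν r σ ≤ M) : OPT ν r c B' ≤ M := by
  obtain ⟨σ₀, hσ₀, hcσ₀⟩ := hne
  refine csSup_le ⟨_, σ₀, hσ₀, hcσ₀, rfl⟩ ?_
  rintro _ ⟨σ, hσ, hcσ, rfl⟩
  exact h σ hσ hcσ

theorem le_OPT (h : ∀ σ, IsPolicy σ → polCost ν c σ ≤ B' → polReward ν r σ ≤ M)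
    (hπ : IsPolicy π) (hcπ : polCost ν c π ≤ B') :
    polReward ν r π ≤ OPT ν r c B' := by
  refine le_csSup ⟨M, ?_⟩ ⟨π, hπ, hcπ, rfl⟩
  rintro _ ⟨σ, hσ, hcσ, rfl⟩
  exact h σ hσ hcσ

variable [DecidableEq A]

def baselinePolicy (a₀ : A) : X → A → ℝ := fun _ => Pi.single a₀ 1

theorem isPolicy_baselinePolicy (a₀ : A) : IsPolicy (baselinePolicy (X := X) a₀) :=
  ⟨fun _ a => by by_cases h : a = a₀ <;> simp [baselinePolicy, h], fun _ => by simp [baselinePolicy],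
    fun _ => measurable_const⟩

theorem polReward_baselinePolicy (f : X → A → ℝ) (a₀ : A) :
    polReward ν f (baselinePolicy a₀) = ∫ x, f x a₀ ∂ν := by
  simp [polReward, baselinePolicy, Pi.single_apply]

theorem polCost_baselinePolicy (f : X → A → ℝ) (a₀ : A) :
    polCost ν f (baselinePolicy a₀) = ∫ x, f x a₀ ∂ν :=
  polReward_baselinePolicy f a₀

end

/-- Example 1 of the paper: with a baseline null-cost action `a₀` and all other actions of
expected cost at least `α > 0`, one has `OPT(r,c,B) − OPT(r,c,0) ≤ B/α` for every `B ≥ 0`;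
in particular every `B`-feasible policy has expected reward at most
`E_{X∼ν}[r(X,a₀)] + B/α`. -/
theorem opt_gap_baseline_action
    (ν : Measure X) [IsProbabilityMeasure ν]
    (r : X → A → ℝ) (c : X → A → ℝ) (B α : ℝ)
    (hr : ∀ x a, r x a ∈ Set.Icc (0 : ℝ) 1)
    (hc : ∀ x a, c x a ∈ Set.Icc (-1 : ℝ) 1)
    (hrm : ∀ a, Measurable fun x => r x a)
    (hcm : ∀ a, Measurable fun x => c x a)
    (a₀ : A) (hnull : ∀ x, c x a₀ = 0)
    (hα : 0 < α) (hcost : ∀ x a, a ≠ a₀ → α ≤ c x a)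
    (hB : 0 ≤ B) :
    OPT ν r c B - OPT ν r c 0 ≤ B / α
      ∧ ∀ π : X → A → ℝ, IsPolicy π → polCost ν c π ≤ B →
          polReward ν r π ≤ (∫ x, r x a₀ ∂ν) + B / α := by
  classical
  have hfeasible : ∀ B' π, IsPolicy π → polCost ν c π ≤ B' →
      polReward ν r π ≤ (∫ x, r x a₀ ∂ν) + B' / α := fun B' π hπ hcπ =>
    (polReward_le_integral_add_polCost_div hr hc hrm hcm hnull hα hcost hπ).trans
      (by gcongr)
  refine ⟨?_, hfeasible B⟩
  have hbase := isPolicy_baselinePolicy (X := X) a₀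
  have hbase_cost : polCost ν c (baselinePolicy a₀) = 0 := by
    simp [polCost_baselinePolicy, hnull]
  have hupper : OPT ν r c B ≤ (∫ x, r x a₀ ∂ν) + B / α :=
    OPT_le ⟨_, hbase, hbase_cost.trans_le hB⟩ (hfeasible B)
  have hlower : ∫ x, r x a₀ ∂ν ≤ OPT ν r c 0 := by
    simpa [polReward_baselinePolicy] using le_OPT (hfeasible 0) hbase hbase_cost.le
  linarith

end CBwK1
end

section
/- (Step 2 of the proof of Lemma 1, inequality (10).) Let X be a set, A a nonempty finite set, d ≥ 1, and C ∈ [0,1]^d. Let r : X×A → [0,1], c : X×A → [−1,1]^d. Fix t ≥ 1 and, for each 1 ≤ τ ≤ t, let x_τ ∈ X, λ_{τ−1} ∈ [0,∞)^d, functions r̂ucb_{τ−1} : X×A → [0,1], ĉlcb_{τ−1} : X×A → [−1,1]^d and errors ε_{τ−1} : X×A → [0,1]. Assume for all 1 ≤ τ ≤ t, x ∈ X, a ∈ A: r(x,a) ≤ r̂ucb_{τ−1}(x,a) ≤ r(x,a) + 2ε_{τ−1}(x,a) and c(x,a) − 2ε_{τ−1}(x,a)·1 ≤ ĉlcb_{τ−1}(x,a)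 ≤ c(x,a) (componentwise). Assume a_τ ∈ A maximizes a ↦ r̂ucb_{τ−1}(x_τ,a) − ⟨ĉlcb_{τ−1}(x_τ,a) − C, λ_{τ−1}⟩. Set Δĉ_τ = ĉlcb_{τ−1}(x_τ,a_τ) − C and g_τ(λ) = max_{a∈A}{ r(x_τ,a) − ⟨c(x_τ,a) − C, λ⟩ }. Then for every λ ∈ [0,∞)^d: Σ_{τ=1}^t ⟨Δĉ_τ, λ_{τ−1} − λ⟩ ≤ 2(1 + ‖λ‖₁) Σ_{τ=1}^t ε_{τ−1}(x_τ,a_τ) + Σ_{τ=1}^t ( g_τ(λ) − g_τ(λ_{τ−1}) ), where ‖·‖₁ is the ℓ1-norm. -/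
open Finset

/-!
Write `L_μ(a) = r(a) − ⟨c(a) − C, μ⟩` for the Lagrangian and `L̂_μ` for its optimistic version
built from `r̂ucb`, `ĉlcb`; then `⟨Δĉ_τ, λ_{τ−1} − λ⟩ = L̂_λ(a_τ) − L̂_{λ_{τ−1}}(a_τ)`.
Optimism and the choice of `a_τ` give `g_τ(λ_{τ−1}) ≤ L̂_{λ_{τ−1}}(a_τ)`, while the width of the
confidence intervals gives `L̂_λ(a_τ) ≤ L_λ(a_τ) + 2(1 + ‖λ‖₁) ε ≤ g_τ(λ) + 2(1 + ‖λ‖₁) ε`.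
Summing over the rounds proves the bound.
-/

namespace Optimism

variable {A ι : Type*} [Fintype ι]

def lagrangian (r : A → ℝ) (c : A → ι → ℝ) (C μ : ι → ℝ) (a : A) : ℝ :=
  r a - ∑ i, (c a i - C i) * μ i

def dualFn [Fintype A] [Nonempty A] (r : A → ℝ) (c : A → ι → ℝ) (C μ : ι → ℝ) : ℝ :=
  univ.sup' univ_nonempty (lagrangian r c C μ)

theorem lagrangian_sub_lagrangian (r : A → ℝ) (c : A → ι → ℝ) (C μ ν : ι → ℝ) (a : A) :
    lagrangian r c C μ a - lagrangian r c C ν a = ∑ i, (c a i - C i) * (ν i - μ i) := by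
  simp only [lagrangian, mul_sub, sum_sub_distrib]
  ring

theorem lagrangian_le_dualFn [Fintype A] [Nonempty A] (r : A → ℝ) (c : A → ι → ℝ)
    (C μ : ι → ℝ) (a : A) : lagrangian r c C μ a ≤ dualFn r c C μ :=
  le_sup' _ (mem_univ a)

theorem lagrangian_le_lagrangian {r r' : A → ℝ} {c c' : A → ι → ℝ} {C μ : ι → ℝ} {a : A}
    (hr : r a ≤ r' a) (hc : ∀ i, c' a i ≤ c a i) (hμ : ∀ i, 0 ≤ μ i) :
    lagrangian r c C μ a ≤ lagrangian r' c' C μ a := by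
  have : ∑ i, (c' a i - C i) * μ i ≤ ∑ i, (c a i - C i) * μ i :=
    sum_le_sum fun i _ => mul_le_mul_of_nonneg_right (by linarith [hc i]) (hμ i)
  unfold lagrangian
  linarith

theorem dualFn_le_lagrangian_of_forall_le [Fintype A] [Nonempty A]
    {r r' : A → ℝ} {c c' : A → ι → ℝ} {C μ : ι → ℝ} {a₀ : A}
    (hr : ∀ a, r a ≤ r' a) (hc : ∀ a i, c' a i ≤ c a i) (hμ : ∀ i, 0 ≤ μ i)
    (hmax : ∀ a, lagrangian r' c' C μ a ≤ lagrangian r' c' C μ a₀) :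
    dualFn r c C μ ≤ lagrangian r' c' C μ a₀ :=
  sup'_le _ _ fun a _ => (lagrangian_le_lagrangian (hr a) (hc a) hμ).trans (hmax a)

theorem lagrangian_le_lagrangian_add {r r' : A → ℝ} {c c' : A → ι → ℝ} {C μ : ι → ℝ} {a : A}
    {δ : ℝ} (hr : r' a ≤ r a + δ) (hc : ∀ i, c a i - δ ≤ c' a i) (hμ : ∀ i, 0 ≤ μ i) :
    lagrangian r' c' C μ a ≤ lagrangian r c C μ a + (1 + ∑ i, |μ i|) * δ := by
  have : ∑ i, (c a i - C i) * μ i ≤ ∑ i, ((c' a i - C i) * μ i + δ * |μ i|) :=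
    sum_le_sum fun i _ => by
      rw [abs_of_nonneg (hμ i)]
      nlinarith [hc i, hμ i]
  rw [sum_add_distrib, ← mul_sum] at this
  unfold lagrangian
  linarith

theorem sum_mul_sub_le_dualFn_sub [Fintype A] [Nonempty A]
    {r r' : A → ℝ} {c c' : A → ι → ℝ} {C μ ν : ι → ℝ} {ε : A → ℝ} {a₀ : A}
    (hr : ∀ a, r a ≤ r' a ∧ r' a ≤ r a + 2 * ε a)
    (hc : ∀ a i, c a i - 2 * ε a ≤ c' a i ∧ c' a i ≤ c a i)
    (hμ : ∀ i, 0 ≤ μ i) (hν : ∀ i, 0 ≤ ν i)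
    (hmax : ∀ a, lagrangian r' c' C μ a ≤ lagrangian r' c' C μ a₀) :
    ∑ i, (c' a₀ i - C i) * (μ i - ν i)
      ≤ 2 * (1 + ∑ i, |ν i|) * ε a₀ + (dualFn r c C ν - dualFn r c C μ) := by
  have hopt :=
    dualFn_le_lagrangian_of_forall_le (fun a => (hr a).1) (fun a i => (hc a i).2) hμ hmax
  have hwidth := lagrangian_le_lagrangian_add (C := C) (hr a₀).2 (fun i => (hc a₀ i).1) hν
  have hdual := lagrangian_le_dualFn r c C ν a₀
  rw [← lagrangian_sub_lagrangian r' c' C ν μ a₀]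
  linarith

end Optimism

open Optimism in
theorem per_round_optimism_bound_general
    {X : Type*} {A : Type*} [Fintype A] [Nonempty A] {d : ℕ}
    (C : Fin d → ℝ)
    (r : X → A → ℝ) (c : X → A → Fin d → ℝ)
    (t : ℕ)
    (x : ℕ → X) (a : ℕ → A) (lam : ℕ → Fin d → ℝ)
    (hlam : ∀ τ ∈ Finset.Icc 1 t, ∀ i, 0 ≤ lam (τ - 1) i)
    (rucb : ℕ → X → A → ℝ) (clcb : ℕ → X → A → Fin d → ℝ) (eps : ℕ → X → A → ℝ)
    (hrucb : ∀ τ ∈ Finset.Icc 1 t, ∀ x' a',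
      r x' a' ≤ rucb (τ - 1) x' a' ∧ rucb (τ - 1) x' a' ≤ r x' a' + 2 * eps (τ - 1) x' a')
    (hclcb : ∀ τ ∈ Finset.Icc 1 t, ∀ x' a' i,
      c x' a' i - 2 * eps (τ - 1) x' a' ≤ clcb (τ - 1) x' a' i
        ∧ clcb (τ - 1) x' a' i ≤ c x' a' i)
    (hmax : ∀ τ ∈ Finset.Icc 1 t, ∀ a' : A,
      rucb (τ - 1) (x τ) a' - ∑ i, (clcb (τ - 1) (x τ) a' i - C i) * lam (τ - 1) i
        ≤ rucb (τ - 1) (x τ) (a τ)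
            - ∑ i, (clcb (τ - 1) (x τ) (a τ) i - C i) * lam (τ - 1) i) :
    ∀ lamb : Fin d → ℝ, (∀ i, 0 ≤ lamb i) →
      ∑ τ ∈ Finset.Icc 1 t, ∑ i,
          (clcb (τ - 1) (x τ) (a τ) i - C i) * (lam (τ - 1) i - lamb i)
        ≤ 2 * (1 + ∑ i, |lamb i|) * (∑ τ ∈ Finset.Icc 1 t, eps (τ - 1) (x τ) (a τ))
          + ∑ τ ∈ Finset.Icc 1 t,
              ((Finset.univ.sup' Finset.univ_nonempty
                  fun a' => r (x τ) a' - ∑ i, (c (x τ) a' i - C i) * lamb i)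
                - (Finset.univ.sup' Finset.univ_nonempty
                  fun a' => r (x τ) a' - ∑ i, (c (x τ) a' i - C i) * lam (τ - 1) i)) := by
  intro lamb hlamb
  rw [mul_sum, ← sum_add_distrib]
  exact sum_le_sum fun τ hτ =>
    sum_mul_sub_le_dualFn_sub (hrucb τ hτ (x τ)) (hclcb τ hτ (x τ)) (hlam τ hτ) hlamb
      (hmax τ hτ)

/-- Step 2 of the proof of Lemma 1 (inequality (10)): with optimistic estimates sandwiched
around `r` and `c`, and actions `a_τ` chosen to maximize the optimistic Lagrangian with
dual variable `λ_{τ−1} ≥ 0`, for every `λ ≥ 0`: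
`Σ_{τ=1}^t ⟨Δĉ_τ, λ_{τ−1} − λ⟩ ≤ 2(1 + ‖λ‖₁) Σ_τ ε_{τ−1}(x_τ,a_τ) + Σ_τ (g_τ(λ) − g_τ(λ_{τ−1}))`,
where `Δĉ_τ = ĉlcb_{τ−1}(x_τ,a_τ) − C` and
`g_τ(λ) = max_a { r(x_τ,a) − ⟨c(x_τ,a) − C, λ⟩ }`. -/
theorem per_round_optimism_bound
    {X : Type*} {A : Type*} [Fintype A] [Nonempty A] {d : ℕ} (hd : 0 < d)
    (C : Fin d → ℝ) (hC : ∀ i, C i ∈ Set.Icc (0 : ℝ) 1)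
    (r : X → A → ℝ) (c : X → A → Fin d → ℝ)
    (hr : ∀ x a, r x a ∈ Set.Icc (0 : ℝ) 1)
    (hc : ∀ x a i, c x a i ∈ Set.Icc (-1 : ℝ) 1)
    (t : ℕ) (ht : 1 ≤ t)
    (x : ℕ → X) (a : ℕ → A) (lam : ℕ → Fin d → ℝ)
    (hlam : ∀ τ ∈ Finset.Icc 1 t, ∀ i, 0 ≤ lam (τ - 1) i)
    (rucb : ℕ → X → A → ℝ) (clcb : ℕ → X → A → Fin d → ℝ) (eps : ℕ → X → A → ℝ)
    (hrucb : ∀ τ ∈ Finset.Icc 1 t, ∀ x' a',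
      r x' a' ≤ rucb (τ - 1) x' a' ∧ rucb (τ - 1) x' a' ≤ r x' a' + 2 * eps (τ - 1) x' a')
    (hclcb : ∀ τ ∈ Finset.Icc 1 t, ∀ x' a' i,
      c x' a' i - 2 * eps (τ - 1) x' a' ≤ clcb (τ - 1) x' a' i
        ∧ clcb (τ - 1) x' a' i ≤ c x' a' i)
    (heps : ∀ τ ∈ Finset.Icc 1 t, ∀ x' a', eps (τ - 1) x' a' ∈ Set.Icc (0 : ℝ) 1)
    (hmax : ∀ τ ∈ Finset.Icc 1 t, ∀ a' : A,
      rucb (τ - 1) (x τ) a' - ∑ i, (clcb (τ - 1) (x τ) a' i - C i) * lam (τ - 1) i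
        ≤ rucb (τ - 1) (x τ) (a τ)
            - ∑ i, (clcb (τ - 1) (x τ) (a τ) i - C i) * lam (τ - 1) i) :
    ∀ lamb : Fin d → ℝ, (∀ i, 0 ≤ lamb i) →
      ∑ τ ∈ Finset.Icc 1 t, ∑ i,
          (clcb (τ - 1) (x τ) (a τ) i - C i) * (lam (τ - 1) i - lamb i)
        ≤ 2 * (1 + ∑ i, |lamb i|) * (∑ τ ∈ Finset.Icc 1 t, eps (τ - 1) (x τ) (a τ))
          + ∑ τ ∈ Finset.Icc 1 t,
              ((Finset.univ.sup' Finset.univ_nonempty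
                  fun a' => r (x τ) a' - ∑ i, (c (x τ) a' i - C i) * lamb i)
                - (Finset.univ.sup' Finset.univ_nonempty
                  fun a' => r (x τ) a' - ∑ i, (c (x τ) a' i - C i) * lam (τ - 1) i)) :=
  per_round_optimism_bound_general C r c t x a lam hlam rucb clcb eps hrucb hclcb hmax
end

section
/- (Induction lemma, Step 4 of the proof of Lemma 1, inequality (12).) Let T ≥ 1 and A, B, C ≥ 0 be real numbers. Let (u_t)_{0 ≤ t ≤ T} be nonnegative real numbers with u₀ ≤ √A, and suppose that for all 1 ≤ t ≤ T: u_t² ≤ A + B·t + C·max_{1 ≤ τ ≤ t} u_{τ−1}. Then for all 0 ≤ t ≤ T: u_t ≤ M, where M = C/2 + √(A + B·T + C²/4). Consequently, u_t ≤ √A + √(B·T) + C for all 0 ≤ t ≤ T. -/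
/-!
With `D = A + B·T`, the bound `M = C/2 + √(D + C²/4)` is the nonnegative root of
`M² = D + C·M`. By strong induction every earlier term is at most `M`, so the recursive
hypothesis gives `u_t² ≤ D + C·M = M²`, i.e. `u_t ≤ M`. The cruder bound follows from
subadditivity of the square root.
-/

open Finset

lemma Real.sqrt_add_le_add_sqrt {x y : ℝ} (hx : 0 ≤ x) (hy : 0 ≤ y) :
    √(x + y) ≤ √x + √y := by
  rw [Real.sqrt_le_iff]
  refine ⟨by positivity, ?_⟩
  nlinarith [Real.sq_sqrt hx, Real.sq_sqrt hy, Real.sqrt_nonneg x, Real.sqrt_nonneg y]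

lemma half_add_sqrt_sq {C D : ℝ} (h : 0 ≤ D + C ^ 2 / 4) :
    (C / 2 + √(D + C ^ 2 / 4)) ^ 2 = D + C * (C / 2 + √(D + C ^ 2 / 4)) := by
  nlinarith [Real.sq_sqrt h]

lemma half_add_sqrt_le {C D : ℝ} (hC : 0 ≤ C) (hD : 0 ≤ D) :
    C / 2 + √(D + C ^ 2 / 4) ≤ √D + C := by
  have hC2 : √(C ^ 2 / 4) = C / 2 := by
    rw [show C ^ 2 / 4 = (C / 2) ^ 2 by ring, Real.sqrt_sq (by positivity)]
  have := Real.sqrt_add_le_add_sqrt hD (by positivity : 0 ≤ C ^ 2 / 4)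
  linarith

lemma le_of_sq_le_add_mul_sup' {T : ℕ} {C D M : ℝ} {u : ℕ → ℝ} (hC : 0 ≤ C) (hM : 0 ≤ M)
    (hDM : D + C * M ≤ M ^ 2) (hu0 : u 0 ≤ M)
    (hrec : ∀ t, ∀ ht : 1 ≤ t, t ≤ T →
      u t ^ 2 ≤ D + C * (Icc 1 t).sup' (nonempty_Icc.mpr ht) (fun τ => u (τ - 1))) :
    ∀ t ≤ T, u t ≤ M := by
  intro t
  induction t using Nat.strong_induction_on with
  | _ t ih =>
    intro htT
    rcases Nat.eq_zero_or_pos t with rfl | ht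
    · exact hu0
    have hsup : (Icc 1 t).sup' (nonempty_Icc.mpr ht) (fun τ => u (τ - 1)) ≤ M :=
      sup'_le _ _ fun τ hτ => ih (τ - 1) (by grind) (by grind)
    refine le_of_sq_le_sq ?_ hM
    calc u t ^ 2 ≤ D + C * (Icc 1 t).sup' (nonempty_Icc.mpr ht) (fun τ => u (τ - 1)) :=
          hrec t ht htT
      _ ≤ D + C * M := by gcongr
      _ ≤ M ^ 2 := hDM

theorem induction_bound_general (T : ℕ) (A B C : ℝ)
    (hA : 0 ≤ A) (hB : 0 ≤ B) (hC : 0 ≤ C)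
    (u : ℕ → ℝ) (hu0 : u 0 ≤ Real.sqrt A)
    (hrec : ∀ t, ∀ ht : 1 ≤ t, t ≤ T →
      (u t) ^ 2 ≤ A + B * t
        + C * (Finset.Icc 1 t).sup' (Finset.nonempty_Icc.mpr ht) (fun τ => u (τ - 1))) :
    (∀ t ≤ T, u t ≤ C / 2 + Real.sqrt (A + B * T + C ^ 2 / 4))
      ∧ (∀ t ≤ T, u t ≤ Real.sqrt A + Real.sqrt (B * T) + C) := by
  have hM : 0 ≤ C / 2 + √(A + B * T + C ^ 2 / 4) := by positivity
  have hsqrtA : √A ≤ C / 2 + √(A + B * T + C ^ 2 / 4) := by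
    have : √A ≤ √(A + B * T + C ^ 2 / 4) := Real.sqrt_le_sqrt (by nlinarith)
    linarith
  have hbound : ∀ t ≤ T, u t ≤ C / 2 + √(A + B * T + C ^ 2 / 4) :=
    le_of_sq_le_add_mul_sup' hC hM (half_add_sqrt_sq (by positivity)).ge (hu0.trans hsqrtA)
      fun t ht htT => (hrec t ht htT).trans (by gcongr)
  refine ⟨hbound, fun t ht => ?_⟩
  calc u t ≤ C / 2 + √(A + B * T + C ^ 2 / 4) := hbound t ht
    _ ≤ √(A + B * T) + C := half_add_sqrt_le hC (by positivity)
    _ ≤ √A + √(B * T) + C := add_le_add_left (Real.sqrt_add_le_add_sqrt hA (by positivity)) C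

/-- Induction lemma (Step 4 of the proof of Lemma 1, inequality (12)): if `u₀ ≤ √A` and
`u_t² ≤ A + B·t + C·max_{1≤τ≤t} u_{τ−1}` for `1 ≤ t ≤ T`, then `u_t ≤ M` for all
`0 ≤ t ≤ T`, where `M = C/2 + √(A + B·T + C²/4)`; consequently
`u_t ≤ √A + √(B·T) + C` for all `0 ≤ t ≤ T`. -/
theorem induction_bound (T : ℕ) (hT : 1 ≤ T) (A B C : ℝ)
    (hA : 0 ≤ A) (hB : 0 ≤ B) (hC : 0 ≤ C)
    (u : ℕ → ℝ) (hu : ∀ t, 0 ≤ u t) (hu0 : u 0 ≤ Real.sqrt A)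
    (hrec : ∀ t, ∀ ht : 1 ≤ t, t ≤ T →
      (u t) ^ 2 ≤ A + B * t
        + C * (Finset.Icc 1 t).sup' (Finset.nonempty_Icc.mpr ht) (fun τ => u (τ - 1))) :
    (∀ t ≤ T, u t ≤ C / 2 + Real.sqrt (A + B * T + C ^ 2 / 4))
      ∧ (∀ t ≤ T, u t ≤ Real.sqrt A + Real.sqrt (B * T) + C) :=
  induction_bound_general T A B C hA hB hC u hu0 hrec
end
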